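/- arXiv:2010.05521 — 2 statements merged into one kernel-verified Lean document; each statement's English description precedes it below -/
import Mathlib

section
/- For every nonnegative integer n, the sum over all words w of length n over {a,b} of m(awb) equals β·x·y·(αx+βy)^n. -/
/-- Number of occurrences of the consecutive pair `cd` in the word `u`
(over the alphabet `{a,b}` encoded as `a = true`, `b = false`). -/
def pairCount (c d : Bool) (u : List Bool) : ℕ :=
  (u.zip u.tail).count (c, d)

/-- The monomial `m(u) = x^{|u|_a} y^{|u|_b} α^{|u|_{aa}+|u|_{ba}} β^{|u|_{ab}+|u|_{bb}}`. -/
def mWord {R : Type*} [CommRing R] (x y α β : R) (u : List Bool) : R :=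
  x ^ u.count true * y ^ u.count false *
    α ^ (pairCount true true u + pairCount false true u) *
    β ^ (pairCount true false u + pairCount false false u)

/-! Every pair of consecutive letters of `u` is counted by the exponent of `α` or `β` according to
its second letter only, so each letter of `u` after the first contributes a factor `αx` (for `a`)
or `βy` (for `b`), and `m(awb) = x · ∏ᵢ (weight of wᵢ) · βy`. Summing this product over all words
`w` of length `n` expands `(αx + βy)^n`. -/

section

variable {R : Type*} [CommRing R] (x y α β : R)

def letterWeight (c : Bool) : R :=
  cond c (α * x) (β * y)

theorem mWord_singleton (c : Bool) : mWord x y α β [c] = cond c x y := by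
  cases c <;> simp [mWord, pairCount]

theorem mWord_cons_cons (c d : Bool) (l : List Bool) :
    mWord x y α β (c :: d :: l) = cond c x y * cond d α β * mWord x y α β (d :: l) := by
  cases c <;> cases d <;> simp [mWord, pairCount, pow_succ] <;> ring

theorem mWord_cons (c : Bool) (l : List Bool) :
    mWord x y α β (c :: l) = cond c x y * (l.map (letterWeight x y α β)).prod := by
  induction l generalizing c with
  | nil => simp [mWord_singleton]
  | cons d l ih =>
    rw [mWord_cons_cons, ih, List.map_cons, List.prod_cons]
    cases d <;> simp only [letterWeight, cond] <;> ring

theorem sum_prod_letterWeight (n : ℕ) :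
    ∑ w : Fin n → Bool, ∏ i, letterWeight x y α β (w i) = (α * x + β * y) ^ n := by
  rw [← Fintype.prod_sum, Fintype.sum_bool]
  simp [letterWeight]

end

/-- Sum over all words `w` of length `n` over `{a,b}` of `m(awb)` equals
`β x y (αx + βy)^n`. -/
theorem sum_m_awb {R : Type*} [CommRing R] (x y α β : R) (n : ℕ) :
    ∑ w : Fin n → Bool,
        mWord x y α β (true :: (List.ofFn w ++ [false])) =
      β * x * y * (α * x + β * y) ^ n := by
  have h_word (w : Fin n → Bool) :
      mWord x y α β (true :: (List.ofFn w ++ [false])) =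
        β * x * y * ∏ i, letterWeight x y α β (w i) := by
    rw [mWord_cons, List.map_append, List.prod_append, List.map_ofFn, List.prod_ofFn,
      List.map_singleton, List.prod_singleton]
    simp only [letterWeight, cond, Function.comp_apply]
    ring
  simp_rw [h_word, ← Finset.mul_sum, sum_prod_letterWeight]
end

section
/- The number of run-constrained binary strings of length n+2 (equivalently, the number of vertices of the Fibonacci-run graph R_n) equals the Fibonacci number f_{n+2}, where f_0 = 0, f_1 = 1, and f_n = f_{n-1} + f_{n-2}. -/
/-!
Split a run-constrained word by its first letter. After a leading `0` what remains is again
run-constrained. A word `1^(j+1) 0^(j+2) w` of length `n + 3` becomes the run-constrained word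
`1^j 0^(j+1) w` of length `n + 1` when one `1` and one `0` of its first block are deleted. Hence
the number `a n` of run-constrained words of length `n` satisfies
`a (n + 3) = a (n + 2) + a (n + 1)`, with `a 1 = a 2 = 1`. A run-constrained word of length at
least two ends in `00`, so the vertices of `R_n` are exactly these words of length `n + 2`
with the final `00` removed.
-/

/-- Run-constrained binary strings (bits encoded as `1 = true`, `0 = false`):
the strings in which every maximal run of 1s is immediately followed by a
strictly longer run of 0s; equivalently (as stated in the paper), the
concatenations of zero or more words from the infinite alphabet
`R = {0} ∪ {1^i 0^{i+1} : i ≥ 1}`. -/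
inductive RunConstrained : List Bool → Prop where
  | nil : RunConstrained []
  | zero {w : List Bool} : RunConstrained w → RunConstrained (false :: w)
  | block {w : List Bool} (i : ℕ) (hi : 1 ≤ i) : RunConstrained w →
      RunConstrained (List.replicate i true ++ List.replicate (i + 1) false ++ w)

/-- Vertices of the Fibonacci-run graph `R_n`: binary strings `w` of length `n`
such that `w00` is a run-constrained string of length `n+2`. -/
def RunVertex (n : ℕ) :=
  {w : Fin n → Bool // RunConstrained (List.ofFn w ++ [false, false])}

/-- The Fibonacci-run graph `R_n`: two vertices are adjacent iff their
Hamming distance is 1. -/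
def runGraph (n : ℕ) : SimpleGraph (RunVertex n) where
  Adj u v := hammingDist u.1 v.1 = 1
  symm := ⟨fun u v h => (hammingDist_comm _ _).trans h⟩
  loopless := ⟨fun u h => by simp [hammingDist_self] at h⟩

open List

namespace RunConstrained

variable {k : ℕ} {l : List Bool} {b : Bool}

/-- For `k = 1` these are the nonempty run-constrained words; a leading `1` raises `k` by one. -/
def OnesZerosThen (k : ℕ) (l : List Bool) : Prop :=
  ∃ j w, l = replicate j true ++ replicate (j + k) false ++ w ∧ RunConstrained w

def ZerosThen (k : ℕ) (l : List Bool) : Prop :=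
  ∃ w, l = replicate k false ++ w ∧ RunConstrained w

theorem iff_eq_nil_or_onesZerosThen_one : RunConstrained l ↔ l = [] ∨ OnesZerosThen 1 l := by
  constructor
  · rintro (_ | ⟨hw⟩ | ⟨i, -, hw⟩)
    · exact .inl rfl
    · exact .inr ⟨0, _, rfl, hw⟩
    · exact .inr ⟨i, _, rfl, hw⟩
  · rintro (rfl | ⟨_ | j, w, rfl, hw⟩)
    · exact nil
    · exact zero hw
    · exact block (j + 1) (Nat.le_add_left 1 j) hw

theorem onesZerosThen_cons_true :
    OnesZerosThen (k + 1) (true :: l) ↔ OnesZerosThen (k + 2) l := by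
  constructor
  · rintro ⟨_ | j, w, hl, hw⟩
    · simp [replicate_succ] at hl
    · rw [show j + 1 + (k + 1) = j + (k + 2) by omega] at hl
      exact ⟨j, w, by simpa [replicate_succ] using hl, hw⟩
  · rintro ⟨j, w, rfl, hw⟩
    refine ⟨j + 1, w, ?_, hw⟩
    rw [show j + 1 + (k + 1) = j + (k + 2) by omega]
    simp [replicate_succ]

theorem onesZerosThen_cons_false : OnesZerosThen (k + 1) (false :: l) ↔ ZerosThen k l := by
  constructor
  · rintro ⟨_ | j, w, hl, hw⟩
    · exact ⟨w, by simpa [replicate_succ] using hl, hw⟩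
    · simp [replicate_succ] at hl
  · rintro ⟨w, rfl, hw⟩
    exact ⟨0, w, by simp [replicate_succ], hw⟩

theorem not_onesZerosThen_nil : ¬ OnesZerosThen (k + 1) [] := by
  rintro ⟨j, w, hl, -⟩
  simp at hl

theorem zerosThen_zero : ZerosThen 0 = RunConstrained :=
  funext fun _ => propext (by simp [ZerosThen])

theorem not_zerosThen_cons_true : ¬ ZerosThen (k + 1) (true :: l) := by
  rintro ⟨w, hl, -⟩
  simp [replicate_succ] at hl

theorem zerosThen_cons_false : ZerosThen (k + 1) (false :: l) ↔ ZerosThen k l := by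
  simp [ZerosThen, replicate_succ]

theorem not_zerosThen_nil : ¬ ZerosThen (k + 1) [] := by
  rintro ⟨w, hl, -⟩
  simp at hl

theorem cons_false_iff : RunConstrained (false :: l) ↔ RunConstrained l := by
  rw [iff_eq_nil_or_onesZerosThen_one, onesZerosThen_cons_false, zerosThen_zero]
  simp

theorem cons_true_iff : RunConstrained (true :: l) ↔ OnesZerosThen 2 l := by
  rw [iff_eq_nil_or_onesZerosThen_one, onesZerosThen_cons_true]
  simp

theorem eq_nil_or_eq_false_or_exists_eq_append (h : RunConstrained l) :
    l = [] ∨ l = [false] ∨ ∃ v, l = v ++ [false, false] := by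
  induction h with
  | nil => exact .inl rfl
  | zero _ ih =>
    rcases ih with rfl | rfl | ⟨v, rfl⟩
    · exact .inr (.inl rfl)
    · exact .inr (.inr ⟨[], rfl⟩)
    · exact .inr (.inr ⟨false :: v, rfl⟩)
  | @block w i hi _ ih =>
    obtain ⟨j, rfl⟩ : ∃ j, i = j + 1 := ⟨i - 1, by omega⟩
    refine .inr (.inr ?_)
    rcases ih with rfl | rfl | ⟨v, rfl⟩
    · exact ⟨replicate (j + 1) true ++ replicate j false, by simp [replicate_succ']⟩
    · exact ⟨replicate (j + 1) true ++ replicate (j + 1) false, by simp [replicate_succ']⟩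
    · exact ⟨replicate (j + 1) true ++ replicate (j + 2) false ++ v, by simp⟩

theorem eq_false_of_append_singleton (h : RunConstrained (l ++ [b])) : b = false := by
  rcases eq_nil_or_eq_false_or_exists_eq_append h with hl | hl | ⟨v, hl⟩
  · simp at hl
  · simpa using append_inj_right' (s₂ := []) hl rfl
  · simpa using append_inj_right' (hl.trans (append_assoc v [false] [false]).symm) rfl

theorem eq_false_of_append_pair (h : RunConstrained (l ++ [b, false])) : b = false := by
  rcases eq_nil_or_eq_false_or_exists_eq_append h with hl | hl | ⟨v, hl⟩
  · simp at hl
  · simpa using congrArg length hl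
  · simpa using append_inj_right' hl rfl

end RunConstrained

noncomputable def numWords (P : List Bool → Prop) (n : ℕ) : ℕ :=
  Nat.card {w : Fin n → Bool // P (List.ofFn w)}

section numWords

variable {P : List Bool → Prop} {n : ℕ}

theorem numWords_eq_zero (h : ∀ l : List Bool, l.length = n → ¬ P l) : numWords P n = 0 := by
  have : IsEmpty {w : Fin n → Bool // P (List.ofFn w)} := ⟨fun w => h _ List.length_ofFn w.2⟩
  exact Nat.card_of_isEmpty

theorem numWords_zero_of_not_nil (h : ¬ P []) : numWords P 0 = 0 :=
  numWords_eq_zero fun _ hl => length_eq_zero_iff.1 hl ▸ h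

theorem numWords_zero_of_nil (h : P []) : numWords P 0 = 1 := by
  have : Nonempty {w : Fin 0 → Bool // P (List.ofFn w)} := ⟨⟨Fin.elim0, by simpa using h⟩⟩
  exact Nat.card_unique

theorem numWords_succ_cons :
    numWords P (n + 1) =
      numWords (fun l => P (true :: l)) n + numWords (fun l => P (false :: l)) n := by
  let e : {w : Fin (n + 1) → Bool // P (List.ofFn w)} ≃
      Σ b, {v : Fin n → Bool // P (b :: List.ofFn v)} :=
    ((Fin.consEquiv fun _ => Bool).subtypeEquiv fun _ => by simp).symm.trans
      (Equiv.subtypeProdEquivSigmaSubtype fun b v => P (b :: List.ofFn v))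
  rw [numWords, Nat.card_congr e, Nat.card_sigma, Fintype.sum_bool]
  rfl

theorem numWords_succ_snoc :
    numWords P (n + 1) =
      numWords (fun l => P (l ++ [true])) n + numWords (fun l => P (l ++ [false])) n := by
  let e : {w : Fin (n + 1) → Bool // P (List.ofFn w)} ≃
      Σ b, {v : Fin n → Bool // P (List.ofFn v ++ [b])} :=
    ((Fin.snocEquiv fun _ => Bool).subtypeEquiv fun _ => by rw [List.ofFn_succ']; simp).symm.trans
      (Equiv.subtypeProdEquivSigmaSubtype fun b v => P (List.ofFn v ++ [b]))
  rw [numWords, Nat.card_congr e, Nat.card_sigma, Fintype.sum_bool]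
  rfl

theorem numWords_succ_of_last_eq_false (h : ∀ l b, P (l ++ [b]) → b = false) :
    numWords P (n + 1) = numWords (fun l => P (l ++ [false])) n := by
  rw [numWords_succ_snoc, numWords_eq_zero fun l _ hl => Bool.noConfusion (h l true hl), zero_add]

end numWords

namespace RunConstrained

theorem numWords_zerosThen_succ (k n : ℕ) :
    numWords (ZerosThen (k + 1)) (n + 1) = numWords (ZerosThen k) n := by
  rw [numWords_succ_cons, numWords_eq_zero fun _ _ => not_zerosThen_cons_true, zero_add]
  simp only [zerosThen_cons_false]

theorem numWords_onesZerosThen_succ (k n : ℕ) :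
    numWords (OnesZerosThen (k + 1)) (n + 1) =
      numWords (OnesZerosThen (k + 2)) n + numWords (ZerosThen k) n := by
  rw [numWords_succ_cons]
  simp only [onesZerosThen_cons_true, onesZerosThen_cons_false]

/-- Deleting one `0` from the first block of zeros, counted by peeling off letters instead of
through an explicit bijection. -/
theorem numWords_onesZerosThen_shift (k n : ℕ) :
    numWords (OnesZerosThen (k + 2)) (n + 1) = numWords (OnesZerosThen (k + 1)) n := by
  induction n generalizing k with
  | zero =>
    rw [numWords_onesZerosThen_succ (k + 1), numWords_zero_of_not_nil not_onesZerosThen_nil,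
      numWords_zero_of_not_nil not_zerosThen_nil, numWords_zero_of_not_nil not_onesZerosThen_nil]
  | succ n ih =>
    rw [numWords_onesZerosThen_succ (k + 1), ih, numWords_zerosThen_succ,
      numWords_onesZerosThen_succ k]

theorem numWords_succ (n : ℕ) :
    numWords RunConstrained (n + 1) = numWords (OnesZerosThen 2) n + numWords RunConstrained n := by
  rw [numWords_succ_cons]
  simp only [cons_true_iff, cons_false_iff]

theorem numWords_onesZerosThen_one (n : ℕ) :
    numWords (OnesZerosThen 1) (n + 1) = numWords RunConstrained (n + 1) := by
  rw [numWords_onesZerosThen_succ 0, numWords_succ, zerosThen_zero]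

theorem numWords_add_three (n : ℕ) :
    numWords RunConstrained (n + 3) =
      numWords RunConstrained (n + 2) + numWords RunConstrained (n + 1) := by
  rw [numWords_succ (n + 2), numWords_onesZerosThen_shift 0, numWords_onesZerosThen_one, add_comm]

theorem numWords_eq_fib : ∀ n, numWords RunConstrained (n + 1) = Nat.fib (n + 1)
  | 0 => by
    rw [numWords_succ, numWords_zero_of_not_nil not_onesZerosThen_nil, numWords_zero_of_nil nil]
    rfl
  | 1 => by
    rw [numWords_succ, numWords_onesZerosThen_shift 0,
      numWords_zero_of_not_nil not_onesZerosThen_nil, numWords_eq_fib 0]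
    rfl
  | n + 2 => by
    rw [numWords_add_three, numWords_eq_fib n, numWords_eq_fib (n + 1)]
    exact (Nat.fib_add_two.trans (add_comm _ _)).symm

end RunConstrained

/-- The number of run-constrained binary strings of length `n+2`
(equivalently, the number of vertices of the Fibonacci-run graph `R_n`)
equals the Fibonacci number `f_{n+2}`. -/
theorem card_runVertex (n : ℕ) :
    Nat.card {w : Fin (n + 2) → Bool // RunConstrained (List.ofFn w)} =
        Nat.fib (n + 2) ∧
    Nat.card (RunVertex n) = Nat.fib (n + 2) := by
  have hfib : numWords RunConstrained (n + 2) = Nat.fib (n + 2) :=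
    RunConstrained.numWords_eq_fib (n + 1)
  refine ⟨hfib, ?_⟩
  calc Nat.card (RunVertex n)
      = numWords (fun l => RunConstrained (l ++ [false] ++ [false])) n := by
        simp only [numWords, append_assoc, singleton_append]; rfl
    _ = numWords (fun l => RunConstrained (l ++ [false])) (n + 1) :=
        (numWords_succ_of_last_eq_false (P := fun l => RunConstrained (l ++ [false]))
          fun _ _ h => RunConstrained.eq_false_of_append_pair (by simpa using h)).symm
    _ = numWords RunConstrained (n + 2) :=
        (numWords_succ_of_last_eq_false fun _ _ => RunConstrained.eq_false_of_append_singleton).symm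
    _ = Nat.fib (n + 2) := hfib
end
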